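/- The map ρ is a *-map: for every continuous compactly supported X : G → M and all continuous compactly supported ξ, η : G → H, ∫_G ⟨(ρ(X^♭) ξ)(g), η(g)⟩ dμ(g) = ∫_G ⟨ξ(g), (ρ(X) η)(g)⟩ dμ(g); that is, ρ(X^♭) is the adjoint of ρ(X) with respect to the L²(G, μ; H) inner product. -/

import Mathlib

open MeasureTheory
open scoped NNReal ENNReal InnerProductSpace

/-- The Haagerup involution `X^♭(g) = δ(g⁻¹) • (α_{g⁻¹}(X(g⁻¹)))^*` of a function `X : G → M`. -/
noncomputable def haagerupFlat {G M : Type*} [Group G] [Ring M] [Algebra ℂ M] [StarRing M]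
    (δ : G →* ℝ≥0) (α : G →* (M ≃ₐ[ℂ] M)) (X : G → M) : G → M :=
  fun g => ((δ g⁻¹ : ℝ) : ℂ) • star (α g⁻¹ (X g⁻¹))

/-- The representation `ρ` of the Haagerup algebra:
`(ρ(X) ξ)(g) = ∫_G π(α_{g⁻¹ h}(X(h)))(ξ(h⁻¹ g)) dμ(h)`, a Bochner integral in `H`. -/
noncomputable def rhoRep {G M H : Type*} [Group G] [MeasurableSpace G]
    [NormedRing M] [NormedAlgebra ℂ M] [StarRing M] [CompleteSpace M]
    [NormedAddCommGroup H] [InnerProductSpace ℂ H] [CompleteSpace H]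
    (μ : Measure G) (α : G →* (M ≃ₐ[ℂ] M)) (π : M →⋆ₐ[ℂ] (H →L[ℂ] H))
    (X : G → M) (ξ : G → H) : G → H :=
  fun g => ∫ h, π (α (g⁻¹ * h) (X h)) (ξ (h⁻¹ * g)) ∂μ

/-!
By the *-property of `π` and `α`, the integrand of the left side at `(g, h)` is
`δ(h⁻¹) ⟪ξ(h⁻¹g), π(α_{g⁻¹}(X(h⁻¹))) η(g)⟫`. The factor `δ(h⁻¹)` is exactly the Jacobian of the
inversion `h ↦ h⁻¹` on a Haar measure, and after this substitution the shear `(g, h) ↦ (hg, h)`,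
which preserves `μ ⊗ μ` by Fubini and left invariance, turns it into the integrand of the right
side.
-/

def IsModularFunction {G : Type*} [Group G] [MeasurableSpace G] (μ : Measure G)
    (δ : G →* ℝ≥0) : Prop :=
  ∀ (g : G) (E : Set G), MeasurableSet E → μ ((fun x => x * g) '' E) = (δ g : ℝ≥0∞) * μ E

lemma isFiniteMeasureOnCompacts_withDensity_of_continuous {X : Type*} [TopologicalSpace X]
    [R1Space X] [MeasurableSpace X] [OpensMeasurableSpace X] {μ : Measure X}
    [IsFiniteMeasureOnCompacts μ] {w : X → ℝ≥0} (hw : Continuous w) :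
    IsFiniteMeasureOnCompacts (μ.withDensity fun x => w x) := by
  refine ⟨fun K hK => ?_⟩
  have hK' : IsCompact (closure K) := hK.closure
  calc μ.withDensity (fun x => w x) K ≤ μ.withDensity (fun x => w x) (closure K) :=
        measure_mono subset_closure
    _ = ∫⁻ x in closure K, w x ∂μ := withDensity_apply _ isClosed_closure.measurableSet
    _ < ⊤ := setLIntegral_lt_top_of_bddAbove hK'.measure_lt_top.ne (hK'.image hw).bddAbove

section Modular

variable {G : Type*} [Group G] [TopologicalSpace G] [IsTopologicalGroup G]
  [MeasurableSpace G] [BorelSpace G] {μ : Measure G} {δ : G →* ℝ≥0}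
  {E : Type*} [NormedAddCommGroup E] [NormedSpace ℝ E]

def modularReflect (δ : G →* ℝ≥0) (f : G → E) (x : G) : E := (δ x⁻¹ : ℝ) • f x⁻¹

omit [TopologicalSpace G] [IsTopologicalGroup G] [MeasurableSpace G] [BorelSpace G] in
lemma modularReflect_modularReflect (f : G → E) :
    modularReflect δ (modularReflect δ f) = f := by
  funext x
  simp only [modularReflect, inv_inv, smul_smul, ← NNReal.coe_mul, ← map_mul, inv_mul_cancel,
    map_one, NNReal.coe_one, one_smul]

omit [MeasurableSpace G] [BorelSpace G] in
lemma Continuous.modularReflect {f : G → E} (hf : Continuous f) (hδc : Continuous δ) :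
    Continuous (modularReflect δ f) :=
  (NNReal.continuous_coe.comp (hδc.comp continuous_inv)).smul (hf.comp continuous_inv)

omit [MeasurableSpace G] [BorelSpace G] in
lemma HasCompactSupport.modularReflect {f : G → E} (hf : HasCompactSupport f) :
    HasCompactSupport (modularReflect δ f) :=
  (hf.comp_homeomorph (Homeomorph.inv G)).smul_left

lemma IsModularFunction.map_mul_right (hδ : IsModularFunction μ δ) (g : G) :
    μ.map (· * g) = (δ g⁻¹ : ℝ≥0∞) • μ := by
  ext E hE
  rw [Measure.map_apply (measurable_mul_const g) hE, Measure.smul_apply, smul_eq_mul,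
    ← hδ g⁻¹ E hE, Set.image_mul_right, inv_inv]

lemma IsModularFunction.isMulRightInvariant_withDensity (hδ : IsModularFunction μ δ)
    (hδc : Continuous δ) : (μ.withDensity fun x => (δ x⁻¹ : ℝ≥0∞)).IsMulRightInvariant := by
  have hw : Measurable fun x : G => (δ x⁻¹ : ℝ≥0∞) :=
    measurable_coe_nnreal_ennreal.comp (hδc.comp continuous_inv).measurable
  refine ⟨fun g => Measure.ext fun E hE => ?_⟩
  have hshift : ∀ x : G, (δ x⁻¹ : ℝ≥0∞) = δ g * δ (x * g)⁻¹ := fun x => by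
    rw [← ENNReal.coe_mul, ← map_mul, mul_inv_rev, mul_inv_cancel_left]
  have hδg : (δ g : ℝ≥0∞) * δ g⁻¹ = 1 := by
    rw [← ENNReal.coe_mul, ← map_mul, mul_inv_cancel, map_one, ENNReal.coe_one]
  rw [Measure.map_apply (measurable_mul_const g) hE, withDensity_apply _ hE,
    withDensity_apply _ (measurable_mul_const g hE), lintegral_congr hshift,
    lintegral_const_mul' _ _ ENNReal.coe_ne_top, ← setLIntegral_map hE hw (measurable_mul_const g),
    hδ.map_mul_right, Measure.restrict_smul, lintegral_smul_measure, smul_eq_mul, ← mul_assoc,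
    hδg, one_mul]

lemma integral_inv_withDensity (hδc : Continuous δ) (f : G → E) :
    ∫ x, f x ∂(μ.withDensity fun x => (δ x⁻¹ : ℝ≥0∞)).inv = ∫ x, modularReflect δ f x ∂μ := by
  rw [Measure.inv, measurableEmbedding_inv.integral_map, integral_withDensity_eq_integral_smul
    (f := fun x => δ x⁻¹) (hδc.comp continuous_inv).measurable]
  rfl

/- `f ↦ ∫ modularReflect δ f` is integration against the left-invariant measure
`(δ(x⁻¹) μ)⁻¹`, hence equal to `c ∫ f` by uniqueness of Haar measure; as `modularReflect δ` is an
involution, `c² = 1`. -/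
theorem IsModularFunction.integral_modularReflect_real [μ.IsHaarMeasure]
    (hδ : IsModularFunction μ δ) (hδc : Continuous δ) {f : G → ℝ} (hf : Continuous f)
    (hfs : HasCompactSupport f) :
    ∫ x, modularReflect δ f x ∂μ = ∫ x, f x ∂μ := by
  rcases hfs.eq_zero_or_locallyCompactSpace_of_group hf with rfl | _
  · simp [modularReflect]
  have := hδ.isMulRightInvariant_withDensity hδc
  have : IsFiniteMeasureOnCompacts (μ.withDensity fun x => (δ x⁻¹ : ℝ≥0∞)) :=
    isFiniteMeasureOnCompacts_withDensity_of_continuous (hδc.comp continuous_inv)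
  set c := (μ.withDensity fun x => (δ x⁻¹ : ℝ≥0∞)).inv.haarScalarFactor μ
  have hscale : ∀ φ : G → ℝ, Continuous φ → HasCompactSupport φ →
      ∫ x, modularReflect δ φ x ∂μ = c * ∫ x, φ x ∂μ := fun φ hφ hφs => by
    rw [← integral_inv_withDensity hδc,
      Measure.integral_isMulLeftInvariant_eq_smul_of_hasCompactSupport _ μ hφ hφs,
      integral_smul_nnreal_measure, NNReal.smul_def, smul_eq_mul]
  obtain ⟨φ, hφs, hφnn, hφ1⟩ : ∃ φ : C(G, ℝ), HasCompactSupport φ ∧ 0 ≤ φ ∧ φ 1 ≠ 0 :=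
    exists_continuous_nonneg_pos 1
  have hpos := φ.continuous.integral_pos_of_hasCompactSupport_nonneg_nonzero (μ := μ) hφs hφnn hφ1
  have hcc : (c : ℝ) * c = 1 := by
    refine mul_right_cancel₀ hpos.ne' ?_
    calc (c : ℝ) * c * ∫ x, φ x ∂μ = c * ∫ x, modularReflect δ φ x ∂μ := by
          rw [hscale φ φ.continuous hφs, mul_assoc]
      _ = ∫ x, modularReflect δ (modularReflect δ φ) x ∂μ :=
          (hscale _ (φ.continuous.modularReflect hδc) hφs.modularReflect).symm
      _ = 1 * ∫ x, φ x ∂μ := by rw [modularReflect_modularReflect, one_mul]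
  have hc : (c : ℝ) = 1 :=
    (mul_self_eq_one_iff.mp hcc).resolve_right (by linarith [NNReal.coe_nonneg c])
  rw [hscale f hf hfs, hc, one_mul]

theorem IsModularFunction.integral_modularReflect {𝕜 : Type*} [RCLike 𝕜] [μ.IsHaarMeasure]
    (hδ : IsModularFunction μ δ) (hδc : Continuous δ) {f : G → 𝕜} (hf : Continuous f)
    (hfs : HasCompactSupport f) :
    ∫ x, modularReflect δ f x ∂μ = ∫ x, f x ∂μ := by
  have hint := hf.integrable_of_hasCompactSupport (μ := μ) hfs
  have hint' := (hf.modularReflect hδc).integrable_of_hasCompactSupport (μ := μ) hfs.modularReflect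
  refine RCLike.ext ?_ ?_
  · rw [← integral_re hint, ← integral_re hint']
    simpa [modularReflect, RCLike.smul_re] using hδ.integral_modularReflect_real hδc
      (RCLike.continuous_re.comp hf) (hfs.comp_left (map_zero _))
  · rw [← integral_im hint, ← integral_im hint']
    simpa [modularReflect, RCLike.smul_im] using hδ.integral_modularReflect_real hδc
      (RCLike.continuous_im.comp hf) (hfs.comp_left (map_zero _))

end Modular

theorem integral_integral_shear {G E : Type*} [Group G] [TopologicalSpace G]
    [IsTopologicalGroup G] [MeasurableSpace G] [BorelSpace G] [NormedAddCommGroup E]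
    [NormedSpace ℝ E] {μ : Measure G} [μ.IsMulLeftInvariant] [IsFiniteMeasureOnCompacts μ]
    {F : G → G → E} (hF : Continuous (Function.uncurry F))
    (hFs : HasCompactSupport (Function.uncurry F)) :
    ∫ g, ∫ h, F (h * g) h ∂μ ∂μ = ∫ g, ∫ h, F g h ∂μ ∂μ := by
  have hshear : HasCompactSupport fun p : G × G => F (p.2 * p.1) p.2 :=
    hFs.comp_homeomorph ((Homeomorph.prodComm G G).trans (Homeomorph.shearMulRight G) |>.trans
      (Homeomorph.prodComm G G))
  rw [integral_integral_swap_of_hasCompactSupport (f := fun g h => F (h * g) h)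
    (hF.comp ((continuous_snd.mul continuous_fst).prodMk continuous_snd)) hshear]
  refine (integral_congr_ae (.of_forall fun h => integral_mul_left_eq_self (F · h) h)).trans ?_
  exact (integral_integral_swap_of_hasCompactSupport hF hFs).symm

theorem integral_inner_left {𝕜 E α : Type*} [RCLike 𝕜] [NormedAddCommGroup E]
    [InnerProductSpace 𝕜 E] [CompleteSpace E] [NormedSpace ℝ E] [MeasurableSpace α]
    {μ : Measure α} {f : α → E} (hf : Integrable f μ) (c : E) :
    ∫ x, ⟪f x, c⟫_𝕜 ∂μ = ⟪∫ x, f x ∂μ, c⟫_𝕜 := by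
  rw [← inner_conj_symm, ← integral_inner hf, ← integral_conj]
  simp only [inner_conj_symm]

lemma StarAlgHom.continuous_of_cstarRing {A B : Type*} [NormedRing A] [StarRing A]
    [CStarRing A] [NormedAlgebra ℂ A] [StarModule ℂ A] [CompleteSpace A] [CStarAlgebra B]
    (φ : A →⋆ₐ[ℂ] B) : Continuous φ := by
  let _ : CStarAlgebra A := { }
  exact AddMonoidHomClass.continuous_of_bound φ 1
    (fun a => by simpa only [one_mul] using NonUnitalStarAlgHom.norm_apply_le φ a)

section Haagerup

variable {G : Type*} [Group G] [TopologicalSpace G] [IsTopologicalGroup G]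
  {M : Type*} [NormedRing M] [StarRing M] [NormedAlgebra ℂ M]
  {H : Type*} [NormedAddCommGroup H] [InnerProductSpace ℂ H] [CompleteSpace H]
  {δ : G →* ℝ≥0} {α : G →* (M ≃ₐ[ℂ] M)} {π : M →⋆ₐ[ℂ] (H →L[ℂ] H)} {X : G → M}

lemma continuous_haagerupFlat [ContinuousStar M] (hX : Continuous X) (hδc : Continuous δ)
    (hαc : Continuous fun p : G × M => α p.1 p.2) : Continuous (haagerupFlat δ α X) :=
  (Complex.continuous_ofReal.comp (NNReal.continuous_coe.comp (hδc.comp continuous_inv))).smul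
    ((hαc.comp (continuous_inv.prodMk (hX.comp continuous_inv))).star)

lemma hasCompactSupport_haagerupFlat (hX : HasCompactSupport X) :
    HasCompactSupport (haagerupFlat δ α X) := by
  refine (hX.comp_homeomorph (Homeomorph.inv G)).mono fun g hg => ?_
  contrapose! hg
  simp [haagerupFlat, show X g⁻¹ = 0 from Function.notMem_support.1 hg]

omit [TopologicalSpace G] [IsTopologicalGroup G] in
lemma inner_haagerupFlat_apply (hαstar : ∀ (g : G) (x : M), α g (star x) = star (α g x))
    (g h : G) (v w : H) :
    ⟪π (α (g⁻¹ * h) (haagerupFlat δ α X h)) v, w⟫_ℂ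
      = ((δ h⁻¹ : ℝ) : ℂ) * ⟪v, π (α g⁻¹ (X h⁻¹)) w⟫_ℂ := by
  have hα : α (g⁻¹ * h) (α h⁻¹ (X h⁻¹)) = α g⁻¹ (X h⁻¹) := by
    rw [← AlgEquiv.mul_apply, ← map_mul, mul_inv_cancel_right]
  rw [haagerupFlat, map_smul, hαstar, hα, map_smul, map_star, smul_apply, inner_smul_left,
    ContinuousLinearMap.star_eq_adjoint, ContinuousLinearMap.adjoint_inner_left,
    Complex.conj_ofReal]

lemma hasCompactSupport_inner_rhoRep_integrand {ξ η : G → H} (hξs : HasCompactSupport ξ)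
    (hXs : HasCompactSupport X) :
    HasCompactSupport fun p : G × G =>
      ⟪ξ p.1, π (α (p.1⁻¹ * p.2) (X p.2)) (η (p.2⁻¹ * p.1))⟫_ℂ := by
  refine HasCompactSupport.intro (hξs.prod hXs) fun ⟨g, h⟩ hgh => ?_
  rcases not_and_or.1 hgh with hg | hh
  · simp [image_eq_zero_of_notMem_tsupport hg]
  · simp [image_eq_zero_of_notMem_tsupport hh]

variable (hπ : Continuous π) (hαc : Continuous fun p : G × M => α p.1 p.2)
include hπ hαc

lemma continuous_rhoRep_integrand (hX : Continuous X) {ξ : G → H} (hξ : Continuous ξ) :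
    Continuous fun p : G × G => π (α (p.1⁻¹ * p.2) (X p.2)) (ξ (p.2⁻¹ * p.1)) :=
  isBoundedBilinearMap_apply.continuous.comp
    ((hπ.comp (hαc.comp ((continuous_fst.inv.mul continuous_snd).prodMk
      (hX.comp continuous_snd)))).prodMk (hξ.comp (continuous_snd.inv.mul continuous_fst)))

lemma integrable_rhoRep_integrand [MeasurableSpace G] [BorelSpace G] {μ : Measure G}
    [IsFiniteMeasureOnCompacts μ] (hX : Continuous X) (hXs : HasCompactSupport X)
    {ξ : G → H} (hξ : Continuous ξ) (g : G) :
    Integrable (fun h => π (α (g⁻¹ * h) (X h)) (ξ (h⁻¹ * g))) μ := by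
  refine ((continuous_rhoRep_integrand hπ hαc hX hξ).comp
    (Continuous.prodMk_right g)).integrable_of_hasCompactSupport ?_
  refine hXs.mono fun h hh => ?_
  contrapose! hh
  simp [Function.notMem_support.1 hh]

end Haagerup

theorem rhoRep_flat_adjoint_general
    {G : Type*} [Group G] [TopologicalSpace G] [IsTopologicalGroup G]
    [MeasurableSpace G] [BorelSpace G]
    (μ : Measure G) [μ.IsHaarMeasure]
    {M : Type*} [NormedRing M] [StarRing M] [CStarRing M] [NormedAlgebra ℂ M]
    [StarModule ℂ M] [CompleteSpace M]
    {H : Type*} [NormedAddCommGroup H] [InnerProductSpace ℂ H] [CompleteSpace H]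
    (δ : G →* ℝ≥0) (hδcont : Continuous δ)
    (hδ : ∀ (g : G) (E : Set G), MeasurableSet E →
      μ ((fun x => x * g) '' E) = (δ g : ℝ≥0∞) * μ E)
    (α : G →* (M ≃ₐ[ℂ] M)) (hαstar : ∀ (g : G) (x : M), α g (star x) = star (α g x))
    (hαcont : Continuous fun p : G × M => α p.1 p.2)
    (π : M →⋆ₐ[ℂ] (H →L[ℂ] H))
    (X : G → M) (hXc : Continuous X) (hXs : HasCompactSupport X)
    (ξ η : G → H) (hξc : Continuous ξ) (hξs : HasCompactSupport ξ)
    (hηc : Continuous η) :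
    ∫ g, ⟪rhoRep μ α π (haagerupFlat δ α X) ξ g, η g⟫_ℂ ∂μ
      = ∫ g, ⟪ξ g, rhoRep μ α π X η g⟫_ℂ ∂μ := by
  have hπ := π.continuous_of_cstarRing
  set Ψ : G → G → ℂ := fun g h => ⟪ξ g, π (α (g⁻¹ * h) (X h)) (η (h⁻¹ * g))⟫_ℂ with hΨ
  have hΨc : Continuous (Function.uncurry Ψ) :=
    (hξc.comp continuous_fst).inner (continuous_rhoRep_integrand hπ hαcont hXc hηc)
  have hΨs : HasCompactSupport (Function.uncurry Ψ) :=
    hasCompactSupport_inner_rhoRep_integrand hξs hXs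
  calc ∫ g, ⟪rhoRep μ α π (haagerupFlat δ α X) ξ g, η g⟫_ℂ ∂μ
      = ∫ g, ∫ h, modularReflect δ (fun h => Ψ (h * g) h) h ∂μ ∂μ := by
        refine integral_congr_ae (.of_forall fun g => ?_)
        simp only [rhoRep]
        rw [← integral_inner_left (integrable_rhoRep_integrand hπ hαcont
          (continuous_haagerupFlat hXc hδcont hαcont) (hasCompactSupport_haagerupFlat hXs) hξc g)]
        refine integral_congr_ae (.of_forall fun h => ?_)
        beta_reduce
        rw [inner_haagerupFlat_apply hαstar, modularReflect, Complex.real_smul, hΨ]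
        simp only [mul_inv_rev, inv_inv, mul_inv_cancel_right, mul_inv_cancel_left]
    _ = ∫ g, ∫ h, Ψ (h * g) h ∂μ ∂μ := by
        refine integral_congr_ae (.of_forall fun g =>
          IsModularFunction.integral_modularReflect hδ hδcont
          (hΨc.comp ((continuous_mul_const g).prodMk continuous_id)) ?_)
        refine hXs.mono fun h hh => ?_
        contrapose! hh
        simp [hΨ, Function.notMem_support.1 hh]
    _ = ∫ g, ∫ h, Ψ g h ∂μ ∂μ := integral_integral_shear hΨc hΨs
    _ = ∫ g, ⟪ξ g, rhoRep μ α π X η g⟫_ℂ ∂μ :=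
        integral_congr_ae (.of_forall fun g =>
          integral_inner (integrable_rhoRep_integrand hπ hαcont hXc hXs hηc g) (ξ g))

/-- The map `ρ` is a *-map: for every continuous compactly supported
`X : G → M` and all continuous compactly supported `ξ, η : G → H`,
`∫_G ⟨(ρ(X^♭) ξ)(g), η(g)⟩ dμ(g) = ∫_G ⟨ξ(g), (ρ(X) η)(g)⟩ dμ(g)`; that is, `ρ(X^♭)` is
the adjoint of `ρ(X)` with respect to the `L²(G, μ; H)` inner product. Here `G` is a
locally compact Hausdorff topological group with left Haar measure `μ`, `δ` is the modular
function of `μ` (the continuous homomorphism with `μ(E g) = δ(g) μ(E)`), `M` is a complex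
C*-algebra with a continuous action `α` of `G` by *-automorphisms, `H` is a complex Hilbert
space, and `π : M → B(H)` is a *-homomorphism. -/
theorem rhoRep_flat_adjoint
    {G : Type*} [Group G] [TopologicalSpace G] [IsTopologicalGroup G]
    [LocallyCompactSpace G] [T2Space G] [MeasurableSpace G] [BorelSpace G]
    (μ : Measure G) [μ.IsHaarMeasure]
    {M : Type*} [NormedRing M] [StarRing M] [CStarRing M] [NormedAlgebra ℂ M]
    [StarModule ℂ M] [CompleteSpace M]
    {H : Type*} [NormedAddCommGroup H] [InnerProductSpace ℂ H] [CompleteSpace H]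
    (δ : G →* ℝ≥0) (hδcont : Continuous δ)
    (hδ : ∀ (g : G) (E : Set G), MeasurableSet E →
      μ ((fun x => x * g) '' E) = (δ g : ℝ≥0∞) * μ E)
    (α : G →* (M ≃ₐ[ℂ] M)) (hαstar : ∀ (g : G) (x : M), α g (star x) = star (α g x))
    (hαcont : Continuous fun p : G × M => α p.1 p.2)
    (π : M →⋆ₐ[ℂ] (H →L[ℂ] H))
    (X : G → M) (hXc : Continuous X) (hXs : HasCompactSupport X)
    (ξ η : G → H) (hξc : Continuous ξ) (hξs : HasCompactSupport ξ)
    (hηc : Continuous η) (hηs : HasCompactSupport η) :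
    ∫ g, ⟪rhoRep μ α π (haagerupFlat δ α X) ξ g, η g⟫_ℂ ∂μ
      = ∫ g, ⟪ξ g, rhoRep μ α π X η g⟫_ℂ ∂μ :=
  rhoRep_flat_adjoint_general μ δ hδcont hδ α hαstar hαcont π X hXc hXs ξ η hξc hξs hηc
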